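/- Let B be a finite set of permutations. Av(B) contains only finitely many vertical alternations if and only if B contains a permutation avoiding all of 123, 3142, 3412; a permutation avoiding both 132 and 312; a permutation avoiding all of 321, 2143, 2413; and a permutation avoiding both 213 and 231. -/

import Mathlib

/-- A list of naturals is a permutation (in one-line notation) of `1,…,n`
where `n` is its length. -/
def IsPermList (l : List ℕ) : Prop :=
  l.Perm ((List.range l.length).map (· + 1))

/-- `f` is an occurrence of the pattern `β` in `π`: a strictly increasing
choice of indices of `π` whose entries are order isomorphic to `β`. -/
def IsOccurrence (π β : List ℕ) (f : Fin β.length → Fin π.length) : Prop :=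
  StrictMono f ∧ ∀ s t : Fin β.length, π.get (f s) < π.get (f t) ↔ β.get s < β.get t

/-- `π` contains the pattern `β`. -/
def PContains (π β : List ℕ) : Prop :=
  ∃ f : Fin β.length → Fin π.length, IsOccurrence π β f

/-- `π` avoids the pattern `β`. -/
def PAvoids (π β : List ℕ) : Prop :=
  ¬ PContains π β

/-- The class of permutations avoiding every member of `B`. -/
def Av (B : Set (List ℕ)) : Set (List ℕ) :=
  {π | IsPermList π ∧ ∀ β ∈ B, PAvoids π β}

/-- Insert a new maximum entry at (0-indexed) position `i` of `l`. -/
def insertMax (l : List ℕ) (i : ℕ) : List ℕ :=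
  l.insertIdx i (l.length + 1)

/-- Position `i` is an active site of `l` relative to `B`. -/
def ActiveSite (B : Set (List ℕ)) (l : List ℕ) (i : ℕ) : Prop :=
  i ≤ l.length ∧ insertMax l i ∈ Av B

/-- The increasing permutation `1,2,…,n`. -/
def incrPerm (n : ℕ) : List ℕ :=
  (List.range n).map (· + 1)

/-- A permutation (as a list) is a vertical alternation: every entry in an even
(1-indexed) position lies above every entry in an odd position, or vice versa.
(Index `s : Fin l.length` corresponds to 1-indexed position `s + 1`.) -/
def VerticalAlternation (l : List ℕ) : Prop :=
  (∀ s t : Fin l.length, s.val % 2 = 1 → t.val % 2 = 0 → l.get t < l.get s) ∨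
  (∀ s t : Fin l.length, s.val % 2 = 1 → t.val % 2 = 0 → l.get s < l.get t)

/-- The subsequence of entries in positions congruent to `r` (0-indexed, mod 2)
is increasing. -/
def IncOnRes (l : List ℕ) (r : ℕ) : Prop :=
  ∀ s t : Fin l.length, s < t → s.val % 2 = r → t.val % 2 = r → l.get s < l.get t

/-- The subsequence of entries in positions congruent to `r` (0-indexed, mod 2)
is decreasing. -/
def DecOnRes (l : List ℕ) (r : ℕ) : Prop :=
  ∀ s t : Fin l.length, s < t → s.val % 2 = r → t.val % 2 = r → l.get t < l.get s

/-- A vertical parallel alternation: a vertical alternation of even length whose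
odd-position and even-position subsequences are both increasing or both decreasing. -/
def IsVertParallel (l : List ℕ) : Prop :=
  VerticalAlternation l ∧ Even l.length ∧
    ((IncOnRes l 0 ∧ IncOnRes l 1) ∨ (DecOnRes l 0 ∧ DecOnRes l 1))

/-- A vertical wedge alternation: a vertical alternation of even length for which one of
the odd-position and even-position subsequences is increasing and the other decreasing. -/
def IsVertWedge (l : List ℕ) : Prop :=
  VerticalAlternation l ∧ Even l.length ∧
    ((IncOnRes l 0 ∧ DecOnRes l 1) ∨ (DecOnRes l 0 ∧ IncOnRes l 1))

/-- The vertical parallel alternation `σ_m`, with `σ_m(2i−1) = m+1−i` and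
`σ_m(2i) = 2m+1−i` (1-indexed). -/
def sigmaAlt (m : ℕ) : List ℕ :=
  (List.range (2 * m)).map (fun j => if j % 2 = 0 then m - j / 2 else 2 * m - j / 2)

/-- The vertical wedge alternation `τ_m`, with `τ_m(2i−1) = m+i` and
`τ_m(2i) = m+1−i` (1-indexed). -/
def tauAlt (m : ℕ) : List ℕ :=
  (List.range (2 * m)).map (fun j => if j % 2 = 0 then m + j / 2 + 1 else m - j / 2)

/-- Standardization: replace each entry of `l` by its rank among the entries of `l`. -/
def stList (l : List ℕ) : List ℕ :=
  l.map (fun x => (l.filter (fun y => y ≤ x)).length)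

/-!
Say that `β` splits monotonically in directions `(up₁, up₂)` if, for some threshold `k`, its
entries below `k` and its entries from `k` on each form a monotone sequence, increasing or
decreasing as `up₁` and `up₂` prescribe. This property passes to patterns, and the four bases in
the statement are exactly its obstructions for the four pairs of directions: `Av(123,3142,3412)`
is the class for (decreasing, decreasing), `Av(132,312)` the one for (decreasing, increasing),
and the other two are their reverses.

By two applications of Erdős–Szekeres, every long vertical alternation contains a skeleton
`lo 0 < hi 0 < lo 1 < hi 1 < ⋯` with both rows monotone, into which every short permutation
splitting monotonically in the same directions embeds. Conversely, for each pair of directions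
there are arbitrarily long vertical alternations that split monotonically themselves, so all
their patterns do too. Hence `Av(B)` has finitely many vertical alternations iff `B` contains a
permutation splitting monotonically in each of the four pairs of directions.
-/

open Finset

theorem exists_strictMonoOn_or_strictAntiOn_subset {α β : Type*} [LinearOrder α]
    [LinearOrder β] {f : α → β} (r s : ℕ) (S : Finset α) (hf : Set.InjOn f S)
    (hS : 2 ^ (r + s) ≤ #S) :
    ∃ T ⊆ S, (#T = r ∧ StrictMonoOn f T) ∨ (#T = s ∧ StrictAntiOn f T) := by
  induction r generalizing s S with
  | zero => exact ⟨∅, empty_subset _, .inl ⟨rfl, by simp [StrictMonoOn]⟩⟩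
  | succ r ihr =>
  induction s generalizing S with
  | zero => exact ⟨∅, empty_subset _, .inr ⟨rfl, by simp [StrictAntiOn]⟩⟩
  | succ s ihs =>
  -- Remove the least element `x` of `S` and split the rest by comparing values with `f x`;
  -- one half is large enough for the induction hypothesis, and `x` extends what it yields.
  have hne : S.Nonempty := card_pos.mp (lt_of_lt_of_le (Nat.two_pow_pos _) hS)
  set x := S.min' hne
  set U := (S.erase x).filter (fun y => f x < f y)
  set D := (S.erase x).filter (fun y => ¬ f x < f y)
  have hUS : U ⊆ S := (filter_subset _ _).trans (erase_subset _ _)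
  have hDS : D ⊆ S := (filter_subset _ _).trans (erase_subset _ _)
  have hx_le : ∀ y ∈ S, x ≤ y := fun y hy => S.min'_le y hy
  have hx_notMem : x ∉ U ∪ D := by simp [U, D]
  have hcard : #U + #D + 1 = #S := by
    rw [card_filter_add_card_filter_not, card_erase_add_one (S.min'_mem hne)]
  rcases le_or_gt (2 ^ (r + (s + 1))) #U with hU | hU
  · obtain ⟨T, hTU, hT | hT⟩ := ihr (s + 1) U (hf.mono hUS) hU
    · refine ⟨insert x T, insert_subset (S.min'_mem hne) (hTU.trans hUS), .inl ⟨?_, ?_⟩⟩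
      · rw [card_insert_of_notMem fun h => hx_notMem (mem_union_left _ (hTU h)), hT.1]
      · rw [coe_insert, strictMonoOn_insert_iff_of_forall_ge fun y hy => hx_le y (hUS (hTU hy))]
        exact ⟨fun y hy _ => (mem_filter.mp (hTU hy)).2, hT.2⟩
    · exact ⟨T, hTU.trans hUS, .inr hT⟩
  · have hD : 2 ^ (r + 1 + s) ≤ #D := by
      rw [show r + 1 + (s + 1) = r + (s + 1) + 1 by ring, pow_succ] at hS
      rw [show r + 1 + s = r + (s + 1) by ring]
      omega
    obtain ⟨T, hTD, hT | hT⟩ := ihs D (hf.mono hDS) hD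
    · exact ⟨T, hTD.trans hDS, .inl hT⟩
    · refine ⟨insert x T, insert_subset (S.min'_mem hne) (hTD.trans hDS), .inr ⟨?_, ?_⟩⟩
      · rw [card_insert_of_notMem fun h => hx_notMem (mem_union_right _ (hTD h)), hT.1]
      · rw [coe_insert, strictAntiOn_insert_iff_of_forall_ge fun y hy => hx_le y (hDS (hTD hy))]
        refine ⟨fun y hy _ => ?_, hT.2⟩
        obtain ⟨hyS, hy⟩ := mem_filter.mp (hTD hy)
        refine lt_of_le_of_ne (not_lt.mp hy) fun h => ?_
        exact ne_of_mem_erase hyS (hf (mem_of_mem_erase hyS) (S.min'_mem hne) h)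

def DirLT (up : Bool) (x y : ℕ) : Prop := if up then x < y else y < x

@[simp] theorem dirLT_true {x y : ℕ} : DirLT true x y ↔ x < y := Iff.rfl

@[simp] theorem dirLT_false {x y : ℕ} : DirLT false x y ↔ y < x := Iff.rfl

theorem dirLT_not {up : Bool} {x y : ℕ} : DirLT (!up) x y ↔ DirLT up y x := by
  cases up <;> rfl

theorem DirLT.lt_iff_lt_and_lt_iff_lt {up : Bool} {a b c d : ℕ} (h : DirLT up a b)
    (h' : DirLT up c d) : (a < b ↔ c < d) ∧ (b < a ↔ d < c) := by
  cases up <;> simp only [dirLT_true, dirLT_false] at h h' ⊢ <;> omega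

theorem dirLT_congr {up : Bool} {a b c d : ℕ} (h : a < b ↔ c < d) (h' : b < a ↔ d < c) :
    DirLT up a b ↔ DirLT up c d := by
  cases up
  exacts [h', h]

def MonoSplit (l : List ℕ) (k : ℕ) (up₁ up₂ : Bool) : Prop :=
  (∀ s t : Fin l.length, s < t → l.get s < k → l.get t < k → DirLT up₁ (l.get s) (l.get t)) ∧
  (∀ s t : Fin l.length, s < t → k ≤ l.get s → k ≤ l.get t → DirLT up₂ (l.get s) (l.get t))

theorem pContains_of_strictMono {π β : List ℕ} (hβ : β.Nodup) (f : Fin β.length → Fin π.length)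
    (hf : StrictMono f) (hv : ∀ s t, β.get s < β.get t → π.get (f s) < π.get (f t)) :
    PContains π β := by
  refine ⟨f, hf, fun s t => ⟨fun h => ?_, hv s t⟩⟩
  rcases lt_trichotomy (β.get s) (β.get t) with hst | hst | hst
  · exact hst
  · rw [hβ.get_inj_iff.mp hst] at h
    exact absurd h (lt_irrefl _)
  · exact absurd (hv t s hst) (lt_asymm h)

section Patterns

variable {l : List ℕ} {a b c d : Fin l.length}

theorem pContains_123 (hab : a < b) (hbc : b < c) (h₁ : l.get a < l.get b)
    (h₂ : l.get b < l.get c) : PContains l [1,2,3] := by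
  refine pContains_of_strictMono (by decide) ![a, b, c]
    (Fin.strictMono_iff_lt_succ.mpr fun i => by fin_cases i <;> assumption) ?_
  simp only [List.get_eq_getElem] at h₁ h₂
  intro s t; fin_cases s <;> fin_cases t <;> simp <;> omega

theorem pContains_132 (hab : a < b) (hbc : b < c) (h₁ : l.get a < l.get c)
    (h₂ : l.get c < l.get b) : PContains l [1,3,2] := by
  refine pContains_of_strictMono (by decide) ![a, b, c]
    (Fin.strictMono_iff_lt_succ.mpr fun i => by fin_cases i <;> assumption) ?_
  simp only [List.get_eq_getElem] at h₁ h₂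
  intro s t; fin_cases s <;> fin_cases t <;> simp <;> omega

theorem pContains_312 (hab : a < b) (hbc : b < c) (h₁ : l.get b < l.get c)
    (h₂ : l.get c < l.get a) : PContains l [3,1,2] := by
  refine pContains_of_strictMono (by decide) ![a, b, c]
    (Fin.strictMono_iff_lt_succ.mpr fun i => by fin_cases i <;> assumption) ?_
  simp only [List.get_eq_getElem] at h₁ h₂
  intro s t; fin_cases s <;> fin_cases t <;> simp <;> omega

theorem pContains_3142 (hab : a < b) (hbc : b < c) (hcd : c < d) (h₁ : l.get b < l.get d)
    (h₂ : l.get d < l.get a) (h₃ : l.get a < l.get c) : PContains l [3,1,4,2] := by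
  refine pContains_of_strictMono (by decide) ![a, b, c, d]
    (Fin.strictMono_iff_lt_succ.mpr fun i => by fin_cases i <;> assumption) ?_
  simp only [List.get_eq_getElem] at h₁ h₂ h₃
  intro s t; fin_cases s <;> fin_cases t <;> simp <;> omega

theorem pContains_3412 (hab : a < b) (hbc : b < c) (hcd : c < d) (h₁ : l.get c < l.get d)
    (h₂ : l.get d < l.get a) (h₃ : l.get a < l.get b) : PContains l [3,4,1,2] := by
  refine pContains_of_strictMono (by decide) ![a, b, c, d]
    (Fin.strictMono_iff_lt_succ.mpr fun i => by fin_cases i <;> assumption) ?_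
  simp only [List.get_eq_getElem] at h₁ h₂ h₃
  intro s t; fin_cases s <;> fin_cases t <;> simp <;> omega

end Patterns

theorem MonoSplit.of_pContains {π β : List ℕ} {k : ℕ} {up₁ up₂ : Bool}
    (h : MonoSplit π k up₁ up₂) (hβ : PContains π β) : ∃ k', MonoSplit β k' up₁ up₂ := by
  classical
  obtain ⟨f, hf, hif⟩ := hβ
  have hle : ∀ s t, β.get s ≤ β.get t → π.get (f s) ≤ π.get (f t) := fun s t h =>
    not_lt.mp fun h' => (not_lt.mpr h) ((hif t s).mp h')
  -- the threshold in `β`: one more than the largest entry of `β` sent below `k`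
  set k' := (univ.filter fun s => π.get (f s) < k).sup fun s => β.get s + 1
  have hk' : ∀ s, β.get s < k' ↔ π.get (f s) < k := by
    refine fun s => ⟨fun hs => ?_, fun hs => ?_⟩
    · obtain ⟨t, ht, hst⟩ := Finset.lt_sup_iff.mp hs
      exact lt_of_le_of_lt (hle s t (Nat.lt_succ_iff.mp hst)) (mem_filter.mp ht).2
    · exact Nat.lt_of_succ_le (le_sup (f := fun s => β.get s + 1) (by simpa using hs))
  refine ⟨k', fun s t hst hs ht => ?_, fun s t hst hs ht => ?_⟩
  · exact (dirLT_congr (hif s t) (hif t s)).mp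
      (h.1 _ _ (hf hst) ((hk' s).mp hs) ((hk' t).mp ht))
  · exact (dirLT_congr (hif s t) (hif t s)).mp (h.2 _ _ (hf hst)
      (not_lt.mp (mt (hk' s).mpr (not_lt.mpr hs))) (not_lt.mp (mt (hk' t).mpr (not_lt.mpr ht))))

theorem MonoSplit.min_of_forall_lt {l : List ℕ} {k B : ℕ} {up₁ up₂ : Bool}
    (h : MonoSplit l k up₁ up₂) (hB : ∀ x ∈ l, x < B) : MonoSplit l (min k B) up₁ up₂ := by
  have hB' : ∀ s, l.get s < B := fun s => hB _ (l.get_mem s)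
  refine ⟨fun s t hst hs ht => h.1 s t hst ?_ ?_, fun s t hst hs ht => h.2 s t hst ?_ ?_⟩ <;>
    simp only [lt_min_iff, min_le_iff] at * <;> grind

theorem MonoSplit.pAvoids {π p : List ℕ} {k : ℕ} {up₁ up₂ : Bool} (h : MonoSplit π k up₁ up₂)
    (B : ℕ) (hB : ∀ x ∈ p, x < B) (hp : ∀ k ≤ B, ¬ MonoSplit p k up₁ up₂) : PAvoids π p :=
  fun hc => by
    obtain ⟨k', hk'⟩ := h.of_pContains hc
    exact hp _ (min_le_right k' B) (hk'.min_of_forall_lt hB)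

theorem List.get_reverse_eq_get_rev {α : Type*} (l : List α) (i : Fin l.reverse.length) :
    l.reverse.get i = l.get (i.cast l.length_reverse).rev := by
  simp only [List.get_eq_getElem, List.getElem_reverse, Fin.val_rev, Fin.val_cast]
  congr 1
  omega

theorem PContains.reverse {π β : List ℕ} (h : PContains π β) :
    PContains π.reverse β.reverse := by
  obtain ⟨f, hf, hif⟩ := h
  refine ⟨fun u => ((f (u.cast β.length_reverse).rev).rev).cast π.length_reverse.symm,
    fun u v huv => ?_, fun u v => ?_⟩
  · simpa [Fin.cast_lt_cast, Fin.rev_lt_rev] using hf (Fin.rev_lt_rev.mpr huv)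
  · simp only [List.get_reverse_eq_get_rev, Fin.cast_cast, Fin.cast_eq_self, Fin.rev_rev]
    exact hif _ _

theorem MonoSplit.reverse {l : List ℕ} {k : ℕ} {up₁ up₂ : Bool} (h : MonoSplit l k up₁ up₂) :
    MonoSplit l.reverse k (!up₁) (!up₂) := by
  have hrev : ∀ {s t : Fin l.reverse.length}, s < t →
      (t.cast l.length_reverse).rev < (s.cast l.length_reverse).rev := fun hst =>
    Fin.rev_lt_rev.mpr ((Fin.cast_lt_cast _).mpr hst)
  simp only [MonoSplit, List.get_reverse_eq_get_rev, dirLT_not]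
  exact ⟨fun s t hst hs ht => h.1 _ _ (hrev hst) ht hs,
    fun s t hst hs ht => h.2 _ _ (hrev hst) ht hs⟩

theorem exists_monoSplit_of_avoids_132_312 {l : List ℕ} (hnd : l.Nodup)
    (h132 : PAvoids l [1,3,2]) (h312 : PAvoids l [3,1,2]) : ∃ k, MonoSplit l k false true := by
  rcases eq_or_ne l [] with rfl | hne
  · exact ⟨0, fun s => s.elim0, fun s => s.elim0⟩
  -- split at the first entry: later entries below it are new minima, those above new maxima
  set z : Fin l.length := ⟨0, List.length_pos_iff.mpr hne⟩
  have hinj : ∀ {s t : Fin l.length}, s ≠ t → l.get s ≠ l.get t := fun h => mt hnd.get_inj_iff.mp h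
  have hz : ∀ {s : Fin l.length}, l.get s ≠ l.get z → z < s := fun {s} h =>
    lt_of_le_of_ne (Nat.zero_le s.val) fun e => h (congrArg l.get e.symm)
  refine ⟨l.get z + 1, fun s t hst hs ht => ?_, fun s t hst hs ht => ?_⟩
  · by_contra hlt
    have hst' : l.get s < l.get t := lt_of_le_of_ne (not_lt.mp hlt) (hinj hst.ne)
    have hzs : z < s := hz (by omega)
    exact h312 (pContains_312 hzs hst hst' (lt_of_le_of_ne (by omega) (hinj (hzs.trans hst).ne')))
  · by_contra hlt
    have hts : l.get t < l.get s := lt_of_le_of_ne (not_lt.mp hlt) (hinj hst.ne')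
    exact h132 (pContains_132 (hz (by omega)) hst (by omega) hts)

theorem exists_monoSplit_of_avoids_123_3142_3412 {l : List ℕ} (hnd : l.Nodup)
    (h123 : PAvoids l [1,2,3]) (h3142 : PAvoids l [3,1,4,2]) (h3412 : PAvoids l [3,4,1,2]) :
    ∃ k, MonoSplit l k false false := by
  classical
  have hinj : ∀ {s t : Fin l.length}, s ≠ t → l.get s ≠ l.get t :=
    fun h => mt hnd.get_inj_iff.mp h
  -- the entries that are not left-to-right minima
  let IsTop : Fin l.length → Prop := fun j => ∃ i < j, l.get i < l.get j
  have bot_lt : ∀ {i j}, i < j → ¬ IsTop j → l.get j < l.get i := fun hij hj =>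
    lt_of_le_of_ne (not_lt.mp fun h => hj ⟨_, hij, h⟩) (hinj hij.ne')
  have top_gt : ∀ {i j}, i < j → IsTop i → l.get j < l.get i := by
    rintro i j hij ⟨h, hhi, hv⟩
    exact lt_of_le_of_ne (not_lt.mp fun h' => h123 (pContains_123 hhi hij hv h')) (hinj hij.ne')
  by_cases hT : ∃ j, IsTop j
  swap
  · exact ⟨0, fun _ _ _ h => absurd h (Nat.not_lt_zero _),
      fun _ t hst _ _ => bot_lt hst fun h => hT ⟨t, h⟩⟩
  obtain ⟨j, hj⟩ := hT
  obtain ⟨t₀, ht₀, hmin⟩ :=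
    exists_min_image (univ.filter IsTop) l.get ⟨j, mem_filter.mpr ⟨mem_univ j, hj⟩⟩
  simp only [mem_filter, mem_univ, true_and] at ht₀ hmin
  refine ⟨l.get t₀, fun s t hst _ ht => bot_lt hst fun h => (hmin t h).not_gt ht,
    fun s t hst hs ht => ?_⟩
  -- Entries above the smallest non-minimum `l t₀` decrease: an ascent `s < t` among them would
  -- combine with `t₀` and its witness `u` into a 3142 or a 3412.
  by_contra hlt
  have hst' : l.get s < l.get t := lt_of_le_of_ne (not_lt.mp hlt) (hinj hst.ne)
  have hs_bot : ¬ IsTop s := fun h => hlt (top_gt hst h)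
  have hs₀ : l.get t₀ < l.get s :=
    lt_of_le_of_ne hs (hinj fun e => hs_bot (e ▸ ht₀))
  obtain ⟨u, hut₀, hu⟩ := ht₀
  have hsu : s < u := by
    refine lt_of_le_of_ne (not_lt.mp fun hus => ?_) fun e => ?_
    · exact absurd (bot_lt hus hs_bot) (by omega)
    · exact absurd hu (by rw [← e]; omega)
  have htt₀ : t < t₀ := by
    refine lt_of_le_of_ne (not_lt.mp fun ht₀t => ?_) fun e => ?_
    · exact absurd (top_gt ht₀t ⟨u, hut₀, hu⟩) (by omega)
    · exact absurd hs₀ (by rw [← e]; omega)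
  rcases lt_or_gt_of_ne (show u ≠ t from fun e => absurd hu (by rw [e]; omega)) with hut | htu
  · exact h3142 (pContains_3142 hsu hut htt₀ hu hs₀ hst')
  · exact h3412 (pContains_3412 hst htu hut₀ hu hs₀ hst')

theorem PAvoids.reverse {π β : List ℕ} (h : PAvoids π β) : PAvoids π.reverse β.reverse :=
  fun hc => h (by simpa using hc.reverse)

theorem exists_monoSplit_false_false_iff {β : List ℕ} (hβ : β.Nodup) :
    (∃ k, MonoSplit β k false false) ↔
      PAvoids β [1,2,3] ∧ PAvoids β [3,1,4,2] ∧ PAvoids β [3,4,1,2] := by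
  refine ⟨fun ⟨_, h⟩ => ?_, fun ⟨h₁, h₂, h₃⟩ =>
    exists_monoSplit_of_avoids_123_3142_3412 hβ h₁ h₂ h₃⟩
  refine ⟨?_, ?_, ?_⟩ <;>
  exact h.pAvoids 5 (by decide) (by simp only [MonoSplit, dirLT_false]; decide)

theorem exists_monoSplit_false_true_iff {β : List ℕ} (hβ : β.Nodup) :
    (∃ k, MonoSplit β k false true) ↔ PAvoids β [1,3,2] ∧ PAvoids β [3,1,2] := by
  refine ⟨fun ⟨_, h⟩ => ?_, fun ⟨h₁, h₂⟩ => exists_monoSplit_of_avoids_132_312 hβ h₁ h₂⟩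
  refine ⟨?_, ?_⟩ <;>
  exact h.pAvoids 5 (by decide) (by simp only [MonoSplit, dirLT_false, dirLT_true]; decide)

theorem exists_monoSplit_true_true_iff {β : List ℕ} (hβ : β.Nodup) :
    (∃ k, MonoSplit β k true true) ↔
      PAvoids β [3,2,1] ∧ PAvoids β [2,1,4,3] ∧ PAvoids β [2,4,1,3] := by
  refine ⟨fun ⟨_, h⟩ => ?_, fun ⟨h₁, h₂, h₃⟩ => ?_⟩
  · refine ⟨?_, ?_, ?_⟩ <;>
    exact h.pAvoids 5 (by decide) (by simp only [MonoSplit, dirLT_true]; decide)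
  · obtain ⟨k, hk⟩ := exists_monoSplit_of_avoids_123_3142_3412 (List.nodup_reverse.mpr hβ)
      h₁.reverse h₃.reverse h₂.reverse
    exact ⟨k, by simpa using hk.reverse⟩

theorem exists_monoSplit_true_false_iff {β : List ℕ} (hβ : β.Nodup) :
    (∃ k, MonoSplit β k true false) ↔ PAvoids β [2,1,3] ∧ PAvoids β [2,3,1] := by
  refine ⟨fun ⟨_, h⟩ => ?_, fun ⟨h₁, h₂⟩ => ?_⟩
  · refine ⟨?_, ?_⟩ <;>
    exact h.pAvoids 5 (by decide) (by simp only [MonoSplit, dirLT_false, dirLT_true]; decide)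
  · obtain ⟨k, hk⟩ := exists_monoSplit_of_avoids_132_312 (List.nodup_reverse.mpr hβ)
      h₂.reverse h₁.reverse
    exact ⟨k, by simpa using hk.reverse⟩

theorem exists_strictMono_dirLT_comp {K R : ℕ} (f : Fin K → ℕ) (hf : Function.Injective f)
    (hK : 2 ^ (R + R) ≤ K) :
    ∃ (up : Bool) (q : Fin R → Fin K),
      StrictMono q ∧ ∀ x y, x < y → DirLT up (f (q x)) (f (q y)) := by
  obtain ⟨T, -, ⟨hT, hmono⟩ | ⟨hT, hanti⟩⟩ :=
    exists_strictMonoOn_or_strictAntiOn_subset R R univ hf.injOn (by simpa using hK)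
  · refine ⟨true, T.orderEmbOfFin hT, (T.orderEmbOfFin hT).strictMono, fun x y hxy => ?_⟩
    exact hmono (T.orderEmbOfFin_mem hT x) (T.orderEmbOfFin_mem hT y)
      ((T.orderEmbOfFin hT).strictMono hxy)
  · refine ⟨false, T.orderEmbOfFin hT, (T.orderEmbOfFin hT).strictMono, fun x y hxy => ?_⟩
    exact hanti (T.orderEmbOfFin_mem hT x) (T.orderEmbOfFin_mem hT y)
      ((T.orderEmbOfFin hT).strictMono hxy)

structure IsSkeleton (π : List ℕ) {L : ℕ} (lo hi : Fin L → Fin π.length) (up₁ up₂ : Bool) :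
    Prop where
  lo_lt_hi : ∀ y, lo y < hi y
  hi_lt_lo : ∀ y z, y < z → hi y < lo z
  get_lo_lt_get_hi : ∀ y z, π.get (lo y) < π.get (hi z)
  lo_dirLT : ∀ y z, y < z → DirLT up₁ (π.get (lo y)) (π.get (lo z))
  hi_dirLT : ∀ y z, y < z → DirLT up₂ (π.get (hi y)) (π.get (hi z))

theorem IsSkeleton.pContains {π β : List ℕ} {L k : ℕ} {lo hi : Fin L → Fin π.length}
    {up₁ up₂ : Bool} (hsk : IsSkeleton π lo hi up₁ up₂) (hβ : MonoSplit β k up₁ up₂)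
    (hlen : β.length ≤ L) : PContains π β := by
  let pos : Fin β.length → Fin π.length := fun s =>
    if β.get s < k then lo (Fin.castLE hlen s) else hi (Fin.castLE hlen s)
  have pos_le : ∀ s, pos s ≤ hi (Fin.castLE hlen s) := fun s => by
    by_cases hs : β.get s < k <;> simp only [pos, hs, if_true, if_false, le_refl]
    exact (hsk.lo_lt_hi _).le
  have le_pos : ∀ s, lo (Fin.castLE hlen s) ≤ pos s := fun s => by
    by_cases hs : β.get s < k <;> simp only [pos, hs, if_true, if_false, le_refl]
    exact (hsk.lo_lt_hi _).le
  have key : ∀ s t, s < t → (π.get (pos s) < π.get (pos t) ↔ β.get s < β.get t) ∧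
      (π.get (pos t) < π.get (pos s) ↔ β.get t < β.get s) := by
    intro s t hst
    have hst' : Fin.castLE hlen s < Fin.castLE hlen t := hst
    by_cases hs : β.get s < k <;> by_cases ht : β.get t < k <;>
      simp only [pos, hs, ht, if_true, if_false]
    · exact (hsk.lo_dirLT _ _ hst').lt_iff_lt_and_lt_iff_lt (hβ.1 s t hst hs ht)
    · exact ⟨iff_of_true (hsk.get_lo_lt_get_hi _ _) (by omega),
        iff_of_false (not_lt.mpr (hsk.get_lo_lt_get_hi _ _).le) (by omega)⟩
    · exact ⟨iff_of_false (not_lt.mpr (hsk.get_lo_lt_get_hi _ _).le) (by omega),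
        iff_of_true (hsk.get_lo_lt_get_hi _ _) (by omega)⟩
    · exact (hsk.hi_dirLT _ _ hst').lt_iff_lt_and_lt_iff_lt
        (hβ.2 s t hst (not_lt.mp hs) (not_lt.mp ht))
  refine ⟨pos, fun s t hst => (pos_le s).trans_lt ((hsk.hi_lt_lo _ _ hst).trans_le (le_pos t)),
    fun s t => ?_⟩
  rcases lt_trichotomy s t with hst | rfl | hts
  · exact (key s t hst).1
  · exact iff_of_false (lt_irrefl _) (lt_irrefl _)
  · exact (key t s hts).2

theorem exists_isSkeleton (L : ℕ) : ∃ N, ∀ π : List ℕ, π.Nodup → VerticalAlternation π →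
    N ≤ π.length →
      ∃ (lo hi : Fin L → Fin π.length) (up₁ up₂ : Bool), IsSkeleton π lo hi up₁ up₂ := by
  set R := 2 ^ (L + L)
  set K := 2 ^ (R + R)
  refine ⟨2 * K + 1, fun π hnd hva hlen => ?_⟩
  obtain ⟨b, hb, hbelow⟩ : ∃ b < 2, ∀ u v : Fin π.length,
      u.val % 2 = b → v.val % 2 ≠ b → π.get u < π.get v := by
    rcases hva with h | h
    · exact ⟨0, by omega, fun u v hu hv => h v u (by omega) hu⟩
    · exact ⟨1, by omega, fun u v hu hv => h u v hu (by omega)⟩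
  let pos : Fin K → Fin 2 → Fin π.length := fun a c =>
    ⟨2 * a + b + c, by have := a.isLt; have := c.isLt; omega⟩
  have hinj : ∀ c, Function.Injective fun a => π.get (pos a c) := fun c a a' h => by
    have := congrArg Fin.val (hnd.get_inj_iff.mp h)
    simp only [pos] at this
    exact Fin.ext (by omega)
  -- first make the lower row monotone, then the upper row above the chosen columns
  obtain ⟨up₁, q, hq, hq₁⟩ := exists_strictMono_dirLT_comp _ (hinj 0) le_rfl
  obtain ⟨up₂, p, hp, hp₂⟩ :=
    exists_strictMono_dirLT_comp (fun x => π.get (pos (q x) 1)) ((hinj 1).comp hq.injective) le_rfl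
  refine ⟨fun y => pos (q (p y)) 0, fun y => pos (q (p y)) 1, up₁, up₂,
    ⟨fun y => ?_, fun y z hyz => ?_, fun y z => ?_, fun y z hyz => hq₁ _ _ (hp hyz),
      fun y z hyz => hp₂ _ _ hyz⟩⟩
  · simp [pos, Fin.lt_def]
  · have := hq (hp hyz)
    simp only [pos, Fin.lt_def] at this ⊢
    omega
  · exact hbelow _ _ (by simp [pos]; omega) (by simp [pos]; omega)

/-- `altPerm false false m` is `sigmaAlt m`. -/
def altPerm (up₁ up₂ : Bool) (m : ℕ) : List ℕ :=
  (List.range (2 * m)).map fun j =>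
    if j % 2 = 0 then (if up₁ then j / 2 + 1 else m - j / 2)
    else m + (if up₂ then j / 2 + 1 else m - j / 2)

section altPerm

variable (up₁ up₂ : Bool) (m : ℕ)

@[simp] theorem length_altPerm : (altPerm up₁ up₂ m).length = 2 * m := by
  simp [altPerm]

theorem get_altPerm (j : Fin (altPerm up₁ up₂ m).length) :
    (altPerm up₁ up₂ m).get j =
      if j.val % 2 = 0 then (if up₁ then j.val / 2 + 1 else m - j.val / 2)
      else m + (if up₂ then j.val / 2 + 1 else m - j.val / 2) := by
  rw [List.get_eq_getElem]
  simp [altPerm]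

theorem isPermList_altPerm : IsPermList (altPerm up₁ up₂ m) := by
  have hnd : (altPerm up₁ up₂ m).Nodup := by
    refine List.Nodup.map_on (fun x hx y hy hxy => ?_) List.nodup_range
    simp only [List.mem_range] at hx hy
    cases up₁ <;> cases up₂ <;> simp only [Bool.false_eq_true, if_true, if_false] at hxy <;>
      split_ifs at hxy <;> omega
  have hsub : altPerm up₁ up₂ m ⊆ (List.range (2 * m)).map (· + 1) := by
    intro x hx
    simp only [altPerm, List.mem_map, List.mem_range] at hx ⊢
    obtain ⟨j, hj, rfl⟩ := hx
    refine ⟨(if j % 2 = 0 then (if up₁ then j / 2 + 1 else m - j / 2)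
      else m + (if up₂ then j / 2 + 1 else m - j / 2)) - 1, ?_, ?_⟩ <;>
    cases up₁ <;> cases up₂ <;> simp only [Bool.false_eq_true, if_true, if_false] <;>
      split_ifs <;> omega
  rw [IsPermList, length_altPerm]
  exact (hnd.subperm hsub).perm_of_length_le (by simp)

theorem verticalAlternation_altPerm : VerticalAlternation (altPerm up₁ up₂ m) := by
  refine .inl fun s t hs ht => ?_
  have hs' := s.isLt
  have ht' := t.isLt
  simp only [length_altPerm] at hs' ht'
  rw [get_altPerm, get_altPerm, if_pos ht, if_neg (show s.val % 2 ≠ 0 by omega)]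
  split_ifs <;> omega

theorem monoSplit_altPerm : MonoSplit (altPerm up₁ up₂ m) (m + 1) up₁ up₂ := by
  constructor <;> intro s t hst hs ht <;>
  · have := t.isLt
    have hst' : s.val < t.val := hst
    simp only [length_altPerm] at this
    rw [get_altPerm] at hs ht ⊢
    rw [get_altPerm]
    cases up₁ <;> cases up₂ <;>
      simp only [Bool.false_eq_true, if_true, if_false, dirLT_true, dirLT_false] at hs ht ⊢ <;>
      split_ifs at hs ht ⊢ <;> omega

end altPerm

theorem IsPermList.nodup {l : List ℕ} (h : IsPermList l) : l.Nodup :=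
  h.nodup_iff.mpr (List.nodup_range.map (add_left_injective 1))

theorem finite_setOf_isPermList_length_lt (N : ℕ) :
    {l : List ℕ | IsPermList l ∧ l.length < N}.Finite := by
  refine ((Set.finite_Iio N).biUnion fun n _ =>
    ((List.range n).map (· + 1)).permutations.finite_toSet).subset fun l ⟨hl, hlen⟩ => ?_
  exact Set.mem_biUnion (show l.length ∈ Set.Iio N from hlen) (List.mem_permutations.mpr hl)

theorem finite_verticalAlternation_iff (B : Set (List ℕ)) :
    {π ∈ Av B | VerticalAlternation π}.Finite ↔
      ∀ up₁ up₂ : Bool, ∃ β ∈ B, ∃ k, MonoSplit β k up₁ up₂ := by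
  constructor
  · intro hfin up₁ up₂
    by_contra! hB
    refine Set.infinite_of_injective_forall_mem (f := altPerm up₁ up₂)
      (fun m m' h => by simpa using congrArg List.length h) (fun m => ?_) hfin
    refine ⟨⟨isPermList_altPerm up₁ up₂ m, fun β hβ hc => ?_⟩,
      verticalAlternation_altPerm up₁ up₂ m⟩
    obtain ⟨k, hk⟩ := (monoSplit_altPerm up₁ up₂ m).of_pContains hc
    exact hB β hβ k hk
  · intro h
    choose β hβB k hk using h
    obtain ⟨N, hN⟩ := exists_isSkeleton (univ.sup fun d : Bool × Bool => (β d.1 d.2).length)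
    refine (finite_setOf_isPermList_length_lt N).subset fun π ⟨⟨hπ, hav⟩, hva⟩ => ⟨hπ, ?_⟩
    by_contra! hlen
    obtain ⟨lo, hi, up₁, up₂, hsk⟩ := hN π hπ.nodup hva hlen
    exact hav _ (hβB up₁ up₂) (hsk.pContains (hk up₁ up₂)
      (le_sup (f := fun d : Bool × Bool => (β d.1 d.2).length) (mem_univ (up₁, up₂))))

theorem stmt7_general (B : Set (List ℕ)) (hB : ∀ β ∈ B, IsPermList β) :
    {π ∈ Av B | VerticalAlternation π}.Finite ↔
      ((∃ β ∈ B, PAvoids β [1,2,3] ∧ PAvoids β [3,1,4,2] ∧ PAvoids β [3,4,1,2]) ∧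
       (∃ β ∈ B, PAvoids β [1,3,2] ∧ PAvoids β [3,1,2]) ∧
       (∃ β ∈ B, PAvoids β [3,2,1] ∧ PAvoids β [2,1,4,3] ∧ PAvoids β [2,4,1,3]) ∧
       (∃ β ∈ B, PAvoids β [2,1,3] ∧ PAvoids β [2,3,1])) := by
  have congr_B : ∀ {P Q : List ℕ → Prop}, (∀ β, β.Nodup → (P β ↔ Q β)) →
      ((∃ β ∈ B, P β) ↔ ∃ β ∈ B, Q β) := fun h =>
    exists_congr fun β => and_congr_right fun hβ => h β (hB β hβ).nodup
  rw [finite_verticalAlternation_iff, Bool.forall_bool, Bool.forall_bool, Bool.forall_bool,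
    congr_B fun _ => exists_monoSplit_false_false_iff,
    congr_B fun _ => exists_monoSplit_false_true_iff,
    congr_B fun _ => exists_monoSplit_true_false_iff,
    congr_B fun _ => exists_monoSplit_true_true_iff]
  exact ⟨fun ⟨⟨h₁, h₂⟩, h₄, h₃⟩ => ⟨h₁, h₂, h₃, h₄⟩, fun ⟨h₁, h₂, h₃, h₄⟩ => ⟨⟨h₁, h₂⟩, h₄, h₃⟩⟩

/-- `Av(B)` contains only finitely many vertical alternations iff `B`
contains a member of each of `Av(123,3142,3412)`, `Av(132,312)`, `Av(321,2143,2413)` and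
`Av(213,231)`. -/
theorem stmt7 (B : Set (List ℕ)) (hBfin : B.Finite) (hB : ∀ β ∈ B, IsPermList β) :
    {π ∈ Av B | VerticalAlternation π}.Finite ↔
      ((∃ β ∈ B, PAvoids β [1,2,3] ∧ PAvoids β [3,1,4,2] ∧ PAvoids β [3,4,1,2]) ∧
       (∃ β ∈ B, PAvoids β [1,3,2] ∧ PAvoids β [3,1,2]) ∧
       (∃ β ∈ B, PAvoids β [3,2,1] ∧ PAvoids β [2,1,4,3] ∧ PAvoids β [2,4,1,3]) ∧
       (∃ β ∈ B, PAvoids β [2,1,3] ∧ PAvoids β [2,3,1])) :=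
  stmt7_general B hB
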